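/- arXiv:2206.04997 — 3 statements merged into one kernel-verified Lean document; each statement's English description precedes it below -/
import Mathlib

section
/- Let θ ∈ (0, π/2) and E > 0. On the domain D = {(u, w) ∈ ℝ² : w² ≤ 2E}, define the cross-wall collision map Ψ(u, w) = ( −w − (u − √(2E − w²))·cot θ , √(2E − w²) ). Then (u, w) ∈ D is a fixed point of Ψ if and only if u = √E · (cot θ − 1)/(cot θ + 1) and w = √E. -/
open Real

theorem Real.cot_pos_of_mem_Ioo {θ : ℝ} (hθ : θ ∈ Set.Ioo 0 (π / 2)) : 0 < cot θ := by
  rw [cot_eq_cos_div_sin]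
  exact div_pos (cos_pos_of_mem_Ioo ⟨by linarith [hθ.1, pi_pos], hθ.2⟩)
    (sin_pos_of_pos_of_lt_pi hθ.1 (by linarith [hθ.2, pi_pos]))

/-- For `E < 0` both sides say `w = 0`, since `√` is `0` on negative reals. -/
theorem Real.sqrt_two_mul_sub_sq_eq_self_iff (E w : ℝ) : √(2 * E - w ^ 2) = w ↔ w = √E := by
  rw [eq_comm (a := w), sqrt_eq_cases, sqrt_eq_cases]
  constructor <;> rintro (⟨h, hw⟩ | ⟨h, rfl⟩)
  · exact Or.inl ⟨by nlinarith, hw⟩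
  · exact Or.inr ⟨by linarith, rfl⟩
  · exact Or.inl ⟨by nlinarith, hw⟩
  · exact Or.inr ⟨by linarith, rfl⟩

theorem neg_sub_sub_mul_eq_self_iff {c u w : ℝ} (hc : c + 1 ≠ 0) :
    -w - (u - w) * c = u ↔ u = w * ((c - 1) / (c + 1)) := by
  rw [mul_div_assoc', eq_div_iff hc]
  constructor <;> intro h <;> linarith

theorem fixedPoint_GB_general (θ E : ℝ) (hθ : θ ∈ Set.Ioo 0 (π / 2)) (u w : ℝ) :
    ((-w - (u - Real.sqrt (2 * E - w ^ 2)) * Real.cot θ,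
        Real.sqrt (2 * E - w ^ 2)) : ℝ × ℝ) = (u, w) ↔
      u = Real.sqrt E * ((Real.cot θ - 1) / (Real.cot θ + 1)) ∧ w = Real.sqrt E := by
  have hc : cot θ + 1 ≠ 0 := by linarith [cot_pos_of_mem_Ioo hθ]
  rw [Prod.mk.injEq, sqrt_two_mul_sub_sq_eq_self_iff, and_congr_left_iff]
  intro hw
  rw [(sqrt_two_mul_sub_sq_eq_self_iff E w).2 hw, neg_sub_sub_mul_eq_self_iff hc, hw]

theorem fixedPoint_GB (θ E : ℝ) (hθ : θ ∈ Set.Ioo 0 (π / 2)) (hE : 0 < E)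
    (u w : ℝ) (hD : w ^ 2 ≤ 2 * E) :
    ((-w - (u - Real.sqrt (2 * E - w ^ 2)) * Real.cot θ,
        Real.sqrt (2 * E - w ^ 2)) : ℝ × ℝ) = (u, w) ↔
      u = Real.sqrt E * ((Real.cot θ - 1) / (Real.cot θ + 1)) ∧ w = Real.sqrt E :=
  fixedPoint_GB_general θ E hθ u w
end

section
/- Let θ ∈ (0, π/2), u₀ > 0, w₀ > 0, T_A = u₀/cos θ, T_B = w₀/sin θ, and suppose T_A/T_B is irrational. Let f : ℝ → ℝ be the 2T_A-periodic function with f(t) = t·u₀ − t²·cos(θ)/2 on [0, 2T_A], and let g : ℝ → ℝ be the 2T_B-periodic function with g(t) = t·w₀ − t²·sin(θ)/2 on [0, 2T_B]. Then the set {(f(t), g(t)) : t ∈ ℝ} is dense in the rectangle [0, u₀²/(2cos θ)] × [0, w₀²/(2sin θ)]. -/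
/-!
Each coordinate is a periodic bouncing motion whose arc over `[0, T]` rises continuously from
`0` to its maximal height, so each coordinate alone sweeps out its whole side of the rectangle.
Since `T_A / T_B` is irrational, the periods `2 T_A` and `2 T_B` generate a dense subgroup of `ℝ`:
keeping the first coordinate fixed by shifting time by multiples of `2 T_A`, the time seen by
the second coordinate, taken modulo `2 T_B`, comes arbitrarily close to any prescribed value,
and continuity of the second coordinate finishes the approximation.
-/

open Real Set Function

theorem Function.Periodic.continuous_of_continuousOn_Icc {B : Type*} [TopologicalSpace B]
    {f : ℝ → B} {p : ℝ} (hp : 0 < p) (hper : Periodic f p) (hf : ContinuousOn f (Icc 0 p)) :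
    Continuous f := by
  have := Fact.mk hp
  have hlift : Continuous (AddCircle.liftIco p 0 f) :=
    AddCircle.liftIco_continuous (by simpa using (hper 0).symm) (by simpa using hf)
  have hf_eq : f = AddCircle.liftIco p 0 f ∘ (↑) := by
    funext x
    obtain ⟨b, hb, hbx⟩ := AddCircle.eq_coe_Ico (x : AddCircle p)
    rw [comp_apply, ← hbx, AddCircle.liftIco_zero_coe_apply hb, ← hper.lift_coe,
      ← hper.lift_coe, hbx]
  rw [hf_eq]
  exact hlift.comp (AddCircle.continuous_mk' p)

theorem prod_range_subset_closure_range_of_periodic {X Y : Type*} [TopologicalSpace X]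
    [TopologicalSpace Y] {f : ℝ → X} {g : ℝ → Y} {p q : ℝ} (hf : Periodic f p)
    (hg : Periodic g q) (hg_cont : Continuous g)
    (hpq : Dense (AddSubgroup.closure {p, q} : Set ℝ)) :
    range f ×ˢ range g ⊆ closure (range fun t => (f t, g t)) := by
  rintro ⟨_, _⟩ ⟨⟨s, rfl⟩, ⟨r, rfl⟩⟩
  let φ : ℝ → X × Y := fun z => (f s, g (s + z))
  have hφ : Continuous φ := continuous_const.prodMk (hg_cont.comp (continuous_const_add s))
  have hφ_image : φ '' (AddSubgroup.closure {p, q} : Set ℝ) ⊆ range fun t => (f t, g t) := by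
    rintro _ ⟨z, hz, rfl⟩
    obtain ⟨m, n, rfl⟩ := AddSubgroup.mem_closure_pair.1 hz
    refine ⟨s + m • p, ?_⟩
    simp only [φ, Prod.mk.injEq, hf.zsmul m s, true_and, ← add_assoc]
    exact (hg.zsmul n _).symm
  simpa [φ] using closure_mono hφ_image (hφ.range_subset_closure_image_dense hpq ⟨r - s, rfl⟩)

theorem Icc_subset_image_parabola {v a : ℝ} (hv : 0 ≤ v) (ha : 0 < a) :
    Icc 0 (v ^ 2 / (2 * a)) ⊆ (fun t => t * v - t ^ 2 * a / 2) '' Icc 0 (v / a) := by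
  have h_apex : v / a * v - (v / a) ^ 2 * a / 2 = v ^ 2 / (2 * a) := by
    field_simp
    ring
  simpa [h_apex] using
    intermediate_value_Icc (div_nonneg hv ha.le) (by fun_prop : Continuous fun t : ℝ =>
      t * v - t ^ 2 * a / 2).continuousOn

theorem Icc_subset_range_of_eqOn_parabola {f : ℝ → ℝ} {v a : ℝ} (hv : 0 ≤ v) (ha : 0 < a)
    (hf : ∀ t ∈ Icc 0 (2 * (v / a)), f t = t * v - t ^ 2 * a / 2) :
    Icc 0 (v ^ 2 / (2 * a)) ⊆ range f := by
  intro y hy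
  obtain ⟨t, ht, rfl⟩ := Icc_subset_image_parabola hv ha hy
  have hva : 0 ≤ v / a := div_nonneg hv ha.le
  exact ⟨t, hf t ⟨ht.1, by linarith [ht.2]⟩⟩

theorem dense_trajectory (θ u₀ w₀ T_A T_B : ℝ) (hθ : θ ∈ Set.Ioo 0 (π / 2))
    (hu₀ : 0 < u₀) (hw₀ : 0 < w₀)
    (hTA : T_A = u₀ / Real.cos θ) (hTB : T_B = w₀ / Real.sin θ)
    (hirr : Irrational (T_A / T_B))
    (f g : ℝ → ℝ)
    (hfper : Function.Periodic f (2 * T_A))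
    (hf : ∀ t ∈ Set.Icc (0 : ℝ) (2 * T_A), f t = t * u₀ - t ^ 2 * Real.cos θ / 2)
    (hgper : Function.Periodic g (2 * T_B))
    (hg : ∀ t ∈ Set.Icc (0 : ℝ) (2 * T_B), g t = t * w₀ - t ^ 2 * Real.sin θ / 2) :
    Set.Icc (0 : ℝ) (u₀ ^ 2 / (2 * Real.cos θ)) ×ˢ
        Set.Icc (0 : ℝ) (w₀ ^ 2 / (2 * Real.sin θ)) ⊆
      closure {p : ℝ × ℝ | ∃ t : ℝ, (f t, g t) = p} := by
  obtain ⟨hθ0, hθ2⟩ := hθ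
  have hcos : 0 < cos θ := cos_pos_of_mem_Ioo ⟨by linarith [pi_pos], hθ2⟩
  have hsin : 0 < sin θ := sin_pos_of_pos_of_lt_pi hθ0 (by linarith)
  have hg_cont : Continuous g :=
    hgper.continuous_of_continuousOn_Icc (by rw [hTB]; positivity)
      ((by fun_prop : Continuous fun t : ℝ => t * w₀ - t ^ 2 * sin θ / 2).continuousOn.congr hg)
  have h_dense : Dense (AddSubgroup.closure {2 * T_A, 2 * T_B} : Set ℝ) :=
    dense_addSubgroupClosure_pair_iff.2 (by rwa [mul_div_mul_left _ _ two_ne_zero])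
  subst hTA hTB
  calc _ ⊆ range f ×ˢ range g :=
        prod_mono (Icc_subset_range_of_eqOn_parabola hu₀.le hcos hf)
          (Icc_subset_range_of_eqOn_parabola hw₀.le hsin hg)
    _ ⊆ _ := prod_range_subset_closure_range_of_periodic hfper hgper hg_cont h_dense
end

section
/- Let θ ∈ (0, π/2), u₀ > 0, w₀ > 0, T_A = u₀/cos θ, T_B = w₀/sin θ, and suppose T_A/T_B = p/q for positive coprime natural numbers p, q. Let f be the 2T_A-periodic function equal to t·u₀ − t²·cos(θ)/2 on [0, 2T_A] and g the 2T_B-periodic extension of t·w₀ − t²·sin(θ)/2 on [0, 2T_B]. Then over one period (0, 2p·T_A], the set {t ∈ (0, 2p·T_A] : f(t) = 0} has exactly p elements and the set {t ∈ (0, 2q·T_B] : g(t) = 0} has exactly q elements; i.e., the periodic orbit has exactly p collisions on the wall ∂Q_A and exactly q collisions on the wall ∂Q_B per period, for a total period of p + q collisions. -/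
/-!
On its first period `(0, 2T]` the parabola `t ↦ t u - t² c / 2` vanishes only at `t = 2T = 2u/c`,
so by periodicity the zeros of its periodic extension are exactly the integer multiples of `2T`;
the interval `(0, 2nT]` contains `n` of them.
-/

open Real Set Function

theorem Function.Periodic.eq_zero_iff_exists_zsmul {α β : Type*} [AddCommGroup α] [LinearOrder α]
    [IsOrderedAddMonoid α] [Archimedean α] [Zero β] {f : α → β} {P : α}
    (hper : Periodic f P) (hP : 0 < P) (hf : ∀ t ∈ Ioc 0 P, f t = 0 ↔ t = P) (t : α) :
    f t = 0 ↔ ∃ k : ℤ, t = k • P := by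
  have hmod : f (toIocMod hP 0 t) = f t := hper.sub_zsmul_eq _
  have hmem : toIocMod hP 0 t ∈ Ioc 0 P := by simpa using toIocMod_mem_Ioc hP 0 t
  have hdecomp := toIocMod_add_toIocDiv_zsmul hP 0 t
  constructor
  · intro ht
    have hPeq : toIocMod hP 0 t = P := (hf _ hmem).1 (hmod ▸ ht)
    refine ⟨toIocDiv hP 0 t + 1, ?_⟩
    rw [hPeq] at hdecomp
    rw [add_zsmul, one_zsmul, add_comm, hdecomp]
  · rintro ⟨k, rfl⟩
    rw [hper.zsmul_eq, ← hper.eq]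
    exact (hf P ⟨hP, le_rfl⟩).2 rfl

lemma ncard_Ioc_inter_int_mul (P : ℝ) (hP : 0 < P) (n : ℕ) :
    {t : ℝ | t ∈ Ioc 0 (n * P) ∧ ∃ k : ℤ, t = k * P}.ncard = n := by
  have hset : {t : ℝ | t ∈ Ioc 0 (n * P) ∧ ∃ k : ℤ, t = k * P}
      = (fun m : ℕ => (m : ℝ) * P) '' Icc 1 n := by
    ext t
    simp only [mem_ofPred_eq, mem_Ioc, mem_image, mem_Icc]
    constructor
    · rintro ⟨⟨ht0, htn⟩, k, rfl⟩
      have hk0 : 0 < k := by exact_mod_cast pos_of_mul_pos_left ht0 hP.le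
      have hkn : (k : ℝ) ≤ n := le_of_mul_le_mul_right htn hP
      lift k to ℕ using hk0.le
      exact ⟨k, ⟨by exact_mod_cast hk0, by exact_mod_cast hkn⟩, rfl⟩
    · rintro ⟨m, ⟨hm1, hmn⟩, rfl⟩
      refine ⟨⟨by positivity, by gcongr⟩, m, rfl⟩
  rw [hset, ncard_image_of_injective _ (fun a b h => by exact_mod_cast mul_right_cancel₀ hP.ne' h),
    ncard_Icc_nat]
  omega

theorem Function.Periodic.ncard_zeros_Ioc {f : ℝ → ℝ} {P : ℝ} (hper : Periodic f P) (hP : 0 < P)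
    (hf : ∀ t ∈ Ioc 0 P, f t = 0 ↔ t = P) (n : ℕ) :
    {t : ℝ | t ∈ Ioc 0 (n * P) ∧ f t = 0}.ncard = n := by
  simp_rw [hper.eq_zero_iff_exists_zsmul hP hf, zsmul_eq_mul]
  exact ncard_Ioc_inter_int_mul P hP n

lemma mul_sub_sq_mul_div_two_eq_zero_iff {t u c : ℝ} (ht : t ≠ 0) (hc : c ≠ 0) :
    t * u - t ^ 2 * c / 2 = 0 ↔ t = 2 * (u / c) := by
  have hfactor : t * u - t ^ 2 * c / 2 = t * (c / 2) * (2 * (u / c) - t) := by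
    field_simp
  rw [hfactor, mul_eq_zero, mul_eq_zero, sub_eq_zero]
  simpa [ht, hc] using eq_comm

lemma ncard_zeros_Ioc_of_periodic_parabola {T u c : ℝ} (hu : 0 < u) (hc : 0 < c) (hT : T = u / c)
    {f : ℝ → ℝ} (hper : Periodic f (2 * T))
    (hf : ∀ t ∈ Icc 0 (2 * T), f t = t * u - t ^ 2 * c / 2) (n : ℕ) :
    {t : ℝ | t ∈ Ioc 0 (2 * (n : ℝ) * T) ∧ f t = 0}.ncard = n := by
  have hT0 : 0 < 2 * T := by rw [hT]; positivity
  have hzero : ∀ t ∈ Ioc 0 (2 * T), f t = 0 ↔ t = 2 * T := fun t ht => by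
    rw [hf t (Ioc_subset_Icc_self ht), hT]
    exact mul_sub_sq_mul_div_two_eq_zero_iff ht.1.ne' hc.ne'
  simpa only [mul_left_comm, mul_assoc] using hper.ncard_zeros_Ioc hT0 hzero n

theorem collision_counts_per_period_general (θ u₀ w₀ T_A T_B : ℝ) (p q : ℕ)
    (hθ : θ ∈ Set.Ioo 0 (π / 2))
    (hu₀ : 0 < u₀) (hw₀ : 0 < w₀)
    (hTA : T_A = u₀ / Real.cos θ) (hTB : T_B = w₀ / Real.sin θ)
    (f g : ℝ → ℝ)
    (hfper : Function.Periodic f (2 * T_A))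
    (hf : ∀ t ∈ Set.Icc (0 : ℝ) (2 * T_A), f t = t * u₀ - t ^ 2 * Real.cos θ / 2)
    (hgper : Function.Periodic g (2 * T_B))
    (hg : ∀ t ∈ Set.Icc (0 : ℝ) (2 * T_B), g t = t * w₀ - t ^ 2 * Real.sin θ / 2) :
    {t : ℝ | t ∈ Set.Ioc 0 (2 * (p : ℝ) * T_A) ∧ f t = 0}.ncard = p ∧
    {t : ℝ | t ∈ Set.Ioc 0 (2 * (q : ℝ) * T_B) ∧ g t = 0}.ncard = q := by
  have hcos : 0 < cos θ := cos_pos_of_mem_Ioo ⟨by linarith [hθ.1, pi_pos], hθ.2⟩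
  have hsin : 0 < sin θ := sin_pos_of_pos_of_lt_pi hθ.1 (by linarith [hθ.2, pi_pos])
  exact ⟨ncard_zeros_Ioc_of_periodic_parabola hu₀ hcos hTA hfper hf p,
    ncard_zeros_Ioc_of_periodic_parabola hw₀ hsin hTB hgper hg q⟩

theorem collision_counts_per_period (θ u₀ w₀ T_A T_B : ℝ) (p q : ℕ)
    (hθ : θ ∈ Set.Ioo 0 (π / 2))
    (hu₀ : 0 < u₀) (hw₀ : 0 < w₀)
    (hTA : T_A = u₀ / Real.cos θ) (hTB : T_B = w₀ / Real.sin θ)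
    (hp : 0 < p) (hq : 0 < q) (hpq : Nat.Coprime p q)
    (hratio : T_A / T_B = (p : ℝ) / q)
    (f g : ℝ → ℝ)
    (hfper : Function.Periodic f (2 * T_A))
    (hf : ∀ t ∈ Set.Icc (0 : ℝ) (2 * T_A), f t = t * u₀ - t ^ 2 * Real.cos θ / 2)
    (hgper : Function.Periodic g (2 * T_B))
    (hg : ∀ t ∈ Set.Icc (0 : ℝ) (2 * T_B), g t = t * w₀ - t ^ 2 * Real.sin θ / 2) :
    {t : ℝ | t ∈ Set.Ioc 0 (2 * (p : ℝ) * T_A) ∧ f t = 0}.ncard = p ∧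
    {t : ℝ | t ∈ Set.Ioc 0 (2 * (q : ℝ) * T_B) ∧ g t = 0}.ncard = q :=
  collision_counts_per_period_general θ u₀ w₀ T_A T_B p q hθ hu₀ hw₀ hTA hTB f g hfper hf hgper hg
end
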